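/- arXiv:1909.12654 — 4 statements merged into one kernel-verified Lean document; each statement's English description precedes it below -/
import Mathlib

section
/- There are no integers α with α ≠ 0 and α ≠ 1 such that α(α−1)(2α−1) is a nonzero perfect square. -/
/-- There are no integers `α ∉ {0, 1}` such that `α(α-1)(2α-1)` is a nonzero
perfect square. -/
theorem stmt_5 :
    ¬ ∃ α : ℤ, α ≠ 0 ∧ α ≠ 1 ∧ ∃ β : ℤ, β ≠ 0 ∧ α * (α - 1) * (2 * α - 1) = β ^ 2 := by
  rintro ⟨α, h0, h1, β, hβ, h⟩
  have hβ2 : (0 : ℤ) < β ^ 2 := by positivity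
  have hα2 : 2 ≤ α := by
    by_contra hlt
    push_neg at hlt
    have h3 : α ≤ -1 := by omega
    have hp : 0 < α * (α - 1) := mul_pos_of_neg_of_neg (by omega) (by omega)
    have := mul_neg_of_pos_of_neg hp (show 2 * α - 1 < 0 by omega)
    linarith
  have c1 : IsCoprime α ((α - 1) * (2 * α - 1)) :=
    IsCoprime.mul_right ⟨1, -1, by ring⟩ ⟨2, -1, by ring⟩
  have c2 : IsCoprime (α - 1) (α * (2 * α - 1)) :=
    IsCoprime.mul_right ⟨-1, 1, by ring⟩ ⟨-2, 1, by ring⟩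
  obtain ⟨a, ha⟩ := Int.sq_of_isCoprime c1 (show α * ((α - 1) * (2 * α - 1)) = β ^ 2 by
    rw [← h]; ring)
  obtain ⟨b, hb⟩ := Int.sq_of_isCoprime c2 (show (α - 1) * (α * (2 * α - 1)) = β ^ 2 by
    rw [← h]; ring)
  have ha' : α = a ^ 2 := by rcases ha with ha | ha <;> nlinarith [sq_nonneg a]
  have hb' : α - 1 = b ^ 2 := by rcases hb with hb | hb <;> nlinarith [sq_nonneg b]
  have hm : (a - b) * (a + b) = 1 := by nlinarith
  rcases Int.mul_eq_one_iff_eq_one_or_neg_one.mp hm with ⟨h1, h2⟩ | ⟨h1, h2⟩ <;>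
    · have : b = 0 := by omega
      nlinarith
end

section
/- Let E₄ : y² + xy − αy = x³ − αx² be the Tate normal curve with parameter α ≠ 0 and torsion point P = (0,0) of order 4 over ℚ. Then for all n ≥ 0, the numerator G_n of the x-coordinate of [n]P (with respect to the division polynomial normalization with γ = 1) satisfies: G_n = 0 if n is odd, and G_n = α^{3n²/4} if n is even. -/
/-!
At `P = (0, 0)` the values `ψₙ(P)` form the normalised elliptic divisibility sequence `W` with
`W₂ = b = -α`, `W₃ = c = -α³` and `W₄ = 0`. Such a sequence is explicit: `Wₙ = 0` when `4 ∣ n`, and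
otherwise `Wₙ = ± c ^ ⌊n² / 8⌋` (times `b` for even `n`) with sign `(-1) ^ ⌊(n - 1) / 4⌋`. Indeed,
in the odd-index recurrence every term carrying the parameter `b` has a factor `W₄ₖ`, so the
induction only has to match exponents and signs, which depend on `n` modulo `8`.

Since `x(P) = 0` we have `Gₙ = -ψₙ₊₁(P) ψₙ₋₁(P)`. For odd `n` one of `n ± 1` is divisible by `4`;
for `n = 2v` the product is `(-1) ^ (v - 1) c ^ (v²)`, so `Gₙ = (-1) ^ (v + v²) α ^ (3v²) = α ^ (3v²)`.
-/

open Polynomial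

/-- The Tate normal form `E₄ : y² + xy - αy = x³ - αx²` with parameter `α`. -/
def E4 (α : ℚ) : WeierstrassCurve.Affine ℚ :=
  { a₁ := 1, a₂ := -α, a₃ := -α, a₄ := 0, a₆ := 0 }

def orderFourSign (n : ℕ) : ℤ := if 4 ∣ n then 0 else (-1) ^ ((n - 1) / 4)

lemma orderFourSign_eight_mul_add (q k : ℕ) : orderFourSign (8 * q + k) = orderFourSign k := by
  unfold orderFourSign
  by_cases hk : 4 ∣ k
  · rw [if_pos hk, if_pos (by omega)]
  · rw [if_neg hk, if_neg (by omega), show (8 * q + k - 1) / 4 = 2 * q + (k - 1) / 4 by omega,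
      pow_add, pow_mul, neg_one_sq, one_pow, one_mul]

lemma eight_mul_add_sq_div_eight (q k : ℕ) :
    (8 * q + k) ^ 2 / 8 = 8 * q ^ 2 + 2 * k * q + k ^ 2 / 8 := by
  have : (8 * q + k) ^ 2 = 8 * (8 * q ^ 2 + 2 * k * q) + k ^ 2 := by ring
  omega

section EDS

variable {R : Type*} [CommRing R]

theorem preNormEDS'_of_d_eq_zero (b c : R) (n : ℕ) :
    preNormEDS' b c 0 n = orderFourSign n * c ^ (n ^ 2 / 8) := by
  induction n using normEDSRec with
  | zero => simp [orderFourSign]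
  | one => simp [orderFourSign]
  | two => simp [orderFourSign]
  | three => simp [orderFourSign]
  | four => simp [orderFourSign]
  | even m h₁ h₂ h₃ h₄ h₅ =>
    rw [preNormEDS'_even, h₁, h₂, h₃, h₄, h₅]
    obtain ⟨q, r, hr, rfl⟩ : ∃ q r, r < 8 ∧ m = 8 * q + r := ⟨m / 8, m % 8, by omega, by omega⟩
    rw [show 2 * (8 * q + r + 3) = 8 * (2 * q) + (2 * r + 6) by ring]
    simp only [add_assoc, orderFourSign_eight_mul_add, eight_mul_add_sq_div_eight]
    interval_cases r <;> norm_num [orderFourSign] <;> ring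
  | odd m h₁ h₂ h₃ h₄ =>
    rw [preNormEDS'_odd, h₁, h₂, h₃, h₄]
    obtain ⟨q, r, hr, rfl⟩ : ∃ q r, r < 8 ∧ m = 8 * q + r := ⟨m / 8, m % 8, by omega, by omega⟩
    rw [show 2 * (8 * q + r + 2) + 1 = 8 * (2 * q) + (2 * r + 5) by ring]
    simp only [add_assoc, orderFourSign_eight_mul_add, eight_mul_add_sq_div_eight]
    interval_cases r <;> norm_num [orderFourSign, parity_simps] <;> ring

lemma preNormEDS'_four_mul_of_d_eq_zero (b c : R) (k : ℕ) : preNormEDS' b c 0 (4 * k) = 0 := by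
  simp [preNormEDS'_of_d_eq_zero, orderFourSign]

lemma preNormEDS'_odd_mul_odd_of_d_eq_zero (b c : R) (u : ℕ) :
    preNormEDS' b c 0 (2 * u + 3) * preNormEDS' b c 0 (2 * u + 1) =
      (-1) ^ u * c ^ ((u + 1) ^ 2) := by
  have hsign : (orderFourSign (2 * u + 3) : R) * orderFourSign (2 * u + 1) = (-1) ^ u := by
    rw [orderFourSign, orderFourSign, if_neg (by omega), if_neg (by omega)]
    push_cast
    rw [← pow_add]
    congr 1
    omega
  have hexp : (2 * u + 3) ^ 2 / 8 + (2 * u + 1) ^ 2 / 8 = (u + 1) ^ 2 := by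
    have : 2 ∣ u * (u + 1) := (Nat.even_mul_succ_self u).two_dvd
    have h₁ : (2 * u + 3) ^ 2 = 4 * (u * (u + 1)) + 8 * (u + 1) + 1 := by ring
    have h₂ : (2 * u + 1) ^ 2 = 4 * (u * (u + 1)) + 1 := by ring
    have h₃ : (u + 1) ^ 2 = u * (u + 1) + (u + 1) := by ring
    omega
  rw [preNormEDS'_of_d_eq_zero, preNormEDS'_of_d_eq_zero, ← hexp, pow_add, ← hsign]
  ring

lemma WeierstrassCurve.evalEval_ψ (W : WeierstrassCurve R) (x y : R) (n : ℤ) :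
    evalEval x y (W.ψ n) = normEDS (evalEval x y W.ψ₂) (W.Ψ₃.eval x) (W.preΨ₄.eval x) n := by
  rw [WeierstrassCurve.ψ, ← coe_evalEvalRingHom, map_normEDS]
  simp

lemma WeierstrassCurve.evalEval_zero_φ (W : WeierstrassCurve R) (y : R) (n : ℤ) :
    evalEval 0 y (W.φ n) = -(evalEval 0 y (W.ψ (n + 1)) * evalEval 0 y (W.ψ (n - 1))) := by
  simp [WeierstrassCurve.φ, evalEval_C]

end EDS

lemma evalEval_E4_ψ (α : ℚ) (n : ℤ) :
    evalEval 0 0 ((E4 α).ψ n) = normEDS (-α) (-α ^ 3) 0 n := by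
  rw [WeierstrassCurve.evalEval_ψ]
  congr 1
  · simp [WeierstrassCurve.ψ₂, WeierstrassCurve.Affine.polynomialY, E4, evalEval_C]
  · simp [WeierstrassCurve.Ψ₃, E4, WeierstrassCurve.b₂, WeierstrassCurve.b₄,
      WeierstrassCurve.b₆, WeierstrassCurve.b₈]
    ring
  · simp [WeierstrassCurve.preΨ₄, E4, WeierstrassCurve.b₂, WeierstrassCurve.b₄,
      WeierstrassCurve.b₆, WeierstrassCurve.b₈]
    ring

theorem stmt_12_general (α : ℚ) (n : ℕ) :
    (Odd n → evalEval 0 0 ((E4 α).φ (n : ℤ)) = 0) ∧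
    (Even n → evalEval 0 0 ((E4 α).φ (n : ℤ)) = α ^ (3 * n ^ 2 / 4)) := by
  rcases n with _ | k
  · simp [WeierstrassCurve.φ_zero]
  rw [WeierstrassCurve.evalEval_zero_φ, evalEval_E4_ψ, evalEval_E4_ψ,
    show ((k + 1 : ℕ) : ℤ) + 1 = ((k + 2 : ℕ) : ℤ) by push_cast; ring,
    show ((k + 1 : ℕ) : ℤ) - 1 = (k : ℤ) by push_cast; ring, normEDS_ofNat, normEDS_ofNat]
  constructor
  · rintro ⟨j, hj⟩
    rcases Nat.even_or_odd j with ⟨i, rfl⟩ | ⟨i, rfl⟩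
    · rw [show k = 4 * i by omega, preNormEDS'_four_mul_of_d_eq_zero]
      ring
    · rw [show k + 2 = 4 * (i + 1) by omega, preNormEDS'_four_mul_of_d_eq_zero]
      ring
  · rintro ⟨u, hu⟩
    obtain ⟨v, rfl⟩ : ∃ v, k = 2 * v + 1 := ⟨u - 1, by omega⟩
    rw [if_neg (by simp [parity_simps]), if_neg (by simp [parity_simps]), mul_one, mul_one,
      show 2 * v + 1 + 2 = 2 * v + 3 by ring, preNormEDS'_odd_mul_odd_of_d_eq_zero,
      show 3 * (2 * v + 1 + 1) ^ 2 / 4 = 3 * (v + 1) ^ 2 by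
        rw [show 3 * (2 * v + 1 + 1) ^ 2 = 4 * (3 * (v + 1) ^ 2) by ring]; omega]
    calc -((-1) ^ v * (-α ^ 3) ^ (v + 1) ^ 2)
        = (-1) ^ ((v + 1) * (v + 2)) * α ^ (3 * (v + 1) ^ 2) := by ring
      _ = α ^ (3 * (v + 1) ^ 2) := by rw [(Nat.even_mul_succ_self (v + 1)).neg_one_pow, one_mul]

/-- For the Tate normal curve `E₄` with `α ≠ 0` and torsion point `P = (0, 0)`
of order `4`, the numerator `Gₙ = φₙ(P)` of the `x`-coordinate of `[n]P`
satisfies `Gₙ = 0` if `n` is odd and `Gₙ = α ^ (3n²/4)` if `n` is even. -/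
theorem stmt_12 (α : ℚ) (hα : α ≠ 0) (h : (E4 α).Nonsingular 0 0)
    (horder : addOrderOf (WeierstrassCurve.Affine.Point.some _ _ h) = 4) (n : ℕ) :
    (Odd n → evalEval 0 0 ((E4 α).φ (n : ℤ)) = 0) ∧
    (Even n → evalEval 0 0 ((E4 α).φ (n : ℤ)) = α ^ (3 * n ^ 2 / 4)) :=
  stmt_12_general α n
end

section
/- Let E₂ : y² = x³ + a₂x² + a₄x with a₄ ≠ 0, a curve with torsion point P = (0,0) of order 2 over ℚ. Then the numerator G_n of the x-coordinate of [n]P satisfies G_n = 0 if n is odd and G_n = a₄^{n²/2} if n is even. -/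
open Polynomial

/-- The curve `E₂ : y² = x³ + a₂x² + a₄x`. -/
def E2 (a₂ a₄ : ℚ) : WeierstrassCurve.Affine ℚ :=
  { a₁ := 0, a₂ := a₂, a₃ := 0, a₄ := a₄, a₆ := 0 }

/-! At `P = (0, 0)` the polynomial `ψ₂ = 2y + a₁x + a₃` vanishes, so `ψₙ(P)` is the normalised
EDS with `b = 0`, `c = Ψ₃(0) = b₈ = -a₄²` and `d = preΨ₄(0) = b₄b₈ - b₆² = -2a₄³`. With `b = 0`
every even term vanishes and the odd terms obey `W(4j+5) = -W(2j+1)W(2j+3)³` and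
`W(4j+7) = W(2j+5)W(2j+3)³`, whose solution is `W(2k+1) = (-1)ᵏ a₄^(k(k+1))`. Since
`φₙ(P) = -ψₙ₊₁(P)ψₙ₋₁(P)`, this vanishes for odd `n`, and for `n = 2k` it is
`a₄^(k(k+1) + (k-1)k) = a₄^(2k²)`. -/

section NormEDSZero

variable {R : Type*} [CommRing R]

lemma normEDS_zero_eq_zero_of_even (c d : R) {n : ℤ} (hn : Even n) : normEDS 0 c d n = 0 := by
  rw [normEDS, if_pos hn, mul_zero]

lemma normEDS_zero_four_mul_add_five (c d : R) (j : ℤ) :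
    normEDS 0 c d (4 * j + 5) = -(normEDS 0 c d (2 * j + 1) * normEDS 0 c d (2 * j + 3) ^ 3) := by
  have h := normEDS_odd 0 c d (2 * j + 2)
  rw [show 2 * (2 * j + 2) + 1 = 4 * j + 5 by ring, show 2 * j + 2 - 1 = 2 * j + 1 by ring,
    show 2 * j + 2 + 1 = 2 * j + 3 by ring,
    normEDS_zero_eq_zero_of_even c d (n := 2 * j + 2 + 2) ⟨j + 2, by ring⟩] at h
  rw [h]; ring

lemma normEDS_zero_four_mul_add_seven (c d : R) (j : ℤ) :
    normEDS 0 c d (4 * j + 7) = normEDS 0 c d (2 * j + 5) * normEDS 0 c d (2 * j + 3) ^ 3 := by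
  have h := normEDS_odd 0 c d (2 * j + 3)
  rw [show 2 * (2 * j + 3) + 1 = 4 * j + 7 by ring, show 2 * j + 3 + 2 = 2 * j + 5 by ring,
    normEDS_zero_eq_zero_of_even c d (n := 2 * j + 3 - 1) ⟨j + 1, by ring⟩] at h
  rw [h]; ring

lemma normEDS_zero_neg_sq_two_mul_add_one (a d : R) (k : ℕ) :
    normEDS 0 (-(a ^ 2)) d (2 * k + 1) = (-1) ^ k * a ^ (k * (k + 1)) := by
  induction k using Nat.strong_induction_on with
  | _ k ih =>
  rcases k with _ | _ | k
  · simp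
  · simp
  obtain ⟨j, rfl | rfl⟩ := Nat.even_or_odd' k
  · have hj := ih j (by omega)
    have hj₁ := ih (j + 1) (by omega)
    push_cast at hj₁ ⊢
    rw [show 2 * ((j : ℤ) + 1) + 1 = 2 * j + 3 by ring] at hj₁
    rw [show 2 * (2 * (j : ℤ) + 1 + 1) + 1 = 4 * j + 5 by ring,
      normEDS_zero_four_mul_add_five, hj, hj₁]
    -- `ring` cannot reduce `(-1) ^ (4 * j)` to `1`; `pow_mul'` rewrites it as `((-1) ^ 4) ^ j`.
    ring_nf
    norm_num [pow_mul']
  · have hj₁ := ih (j + 1) (by omega)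
    have hj₂ := ih (j + 2) (by omega)
    push_cast at hj₁ hj₂ ⊢
    rw [show 2 * ((j : ℤ) + 1) + 1 = 2 * j + 3 by ring] at hj₁
    rw [show 2 * ((j : ℤ) + 2) + 1 = 2 * j + 5 by ring] at hj₂
    rw [show 2 * (2 * (j : ℤ) + 1 + 1 + 1) + 1 = 4 * j + 7 by ring,
      normEDS_zero_four_mul_add_seven, hj₁, hj₂]
    ring_nf
    norm_num [pow_mul']

lemma normEDS_zero_neg_sq_two_mul_add_one_mul_sub_one (a d : R) (k : ℕ) :
    normEDS 0 (-(a ^ 2)) d (2 * k + 1) * normEDS 0 (-(a ^ 2)) d (2 * k - 1) = -a ^ (2 * k ^ 2) := by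
  rcases k with _ | j
  · simp
  have hj := normEDS_zero_neg_sq_two_mul_add_one a d j
  rw [show 2 * ((j + 1 : ℕ) : ℤ) - 1 = 2 * j + 1 by push_cast; ring,
    normEDS_zero_neg_sq_two_mul_add_one, hj]
  ring_nf
  norm_num [pow_mul']

end NormEDSZero

namespace WeierstrassCurve

variable {R : Type*} [CommRing R] (W : WeierstrassCurve R) (x y : R)

lemma evalEval_ψ_s13 (n : ℤ) :
    (W.ψ n).evalEval x y = normEDS (W.ψ₂.evalEval x y) (W.Ψ₃.eval x) (W.preΨ₄.eval x) n := by
  have h := map_normEDS (evalEvalRingHom x y) W.ψ₂ (C W.Ψ₃) (C W.preΨ₄) n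
  rwa [coe_evalEvalRingHom, evalEval_C, evalEval_C] at h

lemma evalEval_φ (n : ℤ) : (W.φ n).evalEval x y =
    x * (W.ψ n).evalEval x y ^ 2 - (W.ψ (n + 1)).evalEval x y * (W.ψ (n - 1)).evalEval x y := by
  simp [WeierstrassCurve.φ, evalEval_C]

end WeierstrassCurve

lemma evalEval_zero_E2_ψ (a₂ a₄ : ℚ) (n : ℤ) :
    evalEval 0 0 ((E2 a₂ a₄).ψ n) = normEDS 0 (-(a₄ ^ 2)) (-(2 * a₄ ^ 3)) n := by
  rw [WeierstrassCurve.evalEval_ψ_s13]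
  congr 1
  · simp [WeierstrassCurve.ψ₂, WeierstrassCurve.Affine.polynomialY, E2]
  · simp [WeierstrassCurve.Ψ₃, WeierstrassCurve.b₈, E2]
  · simp [WeierstrassCurve.preΨ₄, WeierstrassCurve.b₄, WeierstrassCurve.b₆,
      WeierstrassCurve.b₈, E2]
    ring

theorem stmt_13_general (a₂ a₄ : ℚ) (n : ℕ) :
    (Odd n → evalEval 0 0 ((E2 a₂ a₄).φ (n : ℤ)) = 0) ∧
    (Even n → evalEval 0 0 ((E2 a₂ a₄).φ (n : ℤ)) = a₄ ^ (n ^ 2 / 2)) := by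
  simp only [WeierstrassCurve.evalEval_φ, evalEval_zero_E2_ψ, zero_mul, zero_sub]
  constructor
  · rintro ⟨k, rfl⟩
    rw [normEDS_zero_eq_zero_of_even _ _ ⟨k + 1, by push_cast; ring⟩, zero_mul, neg_zero]
  · rintro ⟨k, rfl⟩
    rw [show ((k + k : ℕ) : ℤ) = 2 * k by push_cast; ring,
      normEDS_zero_neg_sq_two_mul_add_one_mul_sub_one, neg_neg,
      show (k + k) ^ 2 / 2 = 2 * k ^ 2 by rw [show (k + k) ^ 2 = 2 * (2 * k ^ 2) by ring]; simp]

/-- For the curve `E₂ : y² = x³ + a₂x² + a₄x` with `a₄ ≠ 0` and torsion point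
`P = (0, 0)` of order `2`, the numerator `Gₙ = φₙ(P)` of the `x`-coordinate of
`[n]P` satisfies `Gₙ = 0` if `n` is odd and `Gₙ = a₄ ^ (n²/2)` if `n` is even. -/
theorem stmt_13 (a₂ a₄ : ℚ) (ha : a₄ ≠ 0) (h : (E2 a₂ a₄).Nonsingular 0 0)
    (horder : addOrderOf (WeierstrassCurve.Affine.Point.some _ _ h) = 2) (n : ℕ) :
    (Odd n → evalEval 0 0 ((E2 a₂ a₄).φ (n : ℤ)) = 0) ∧
    (Even n → evalEval 0 0 ((E2 a₂ a₄).φ (n : ℤ)) = a₄ ^ (n ^ 2 / 2)) :=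
  stmt_13_general a₂ a₄ n
end

section
/- Let E₃ : y² + a₁xy + a₃y = x³ with a₃ ≠ 0, a curve over ℚ with torsion point P = (0,0) of order 3. Then the numerator G_n of the x-coordinate of [n]P satisfies G_n = 0 if n ≡ 1, 2 (mod 3), and G_n = a₃^{2n²/3} if n ≡ 0 (mod 3). -/
open Polynomial

/-- The curve `E₃ : y² + a₁xy + a₃y = x³`. -/
def E3 (a₁ a₃ : ℚ) : WeierstrassCurve.Affine ℚ :=
  { a₁ := a₁, a₂ := 0, a₃ := a₃, a₄ := 0, a₆ := 0 }

/-!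
At `P = (0, 0)` on `y² + a₁xy + a₃y = x³` the initial values `ψ₂, Ψ₃, preΨ₄` of the division
polynomials evaluate to `a₃, 0, -a₃⁴`, so `ψₙ(P)` is the normalised EDS `W` with these
initial values. Solving its recurrence gives `W(n) = 0` for `3 ∣ n`, and otherwise
`W(n) = ± a₃ ^ ((n² - 1) / 3)` with sign `+` for `n ≡ 1, 2` and `-` for `n ≡ 4, 5 (mod 6)`.
Then `Gₙ = -W(n + 1) W(n - 1)`, and the exponents add up to `2n²/3` when `3 ∣ n`.
-/

section OrderThreeSeq

variable {R : Type*} [CommRing R] (a : R)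

/-- The value `± a ^ ((n² - 1) / 3)` for odd `n`, and `± a ^ ((n² - 1) / 3 - 1)` for even `n`
(where `preNormEDS'` lacks the factor `a` of `normEDS`), written in terms of `q = n / 6`. -/
def orderThreeSeq (n : ℕ) : R :=
  if n % 3 = 0 then 0
  else if n % 6 = 1 then a ^ (12 * (n / 6) ^ 2 + 4 * (n / 6))
  else if n % 6 = 2 then a ^ (12 * (n / 6) ^ 2 + 8 * (n / 6))
  else if n % 6 = 4 then -a ^ (12 * (n / 6) ^ 2 + 16 * (n / 6) + 4)
  else -a ^ (12 * (n / 6) ^ 2 + 20 * (n / 6) + 8)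

variable {a}

lemma orderThreeSeq_of_three_dvd {n : ℕ} (h : 3 ∣ n) : orderThreeSeq a n = 0 :=
  if_pos (by omega)

lemma orderThreeSeq_of_eq_six_mul_add_one {n q : ℕ} (h : n = 6 * q + 1) :
    orderThreeSeq a n = a ^ (12 * q ^ 2 + 4 * q) := by
  rw [orderThreeSeq, if_neg (by omega), if_pos (by omega), show n / 6 = q by omega]

lemma orderThreeSeq_of_eq_six_mul_add_two {n q : ℕ} (h : n = 6 * q + 2) :
    orderThreeSeq a n = a ^ (12 * q ^ 2 + 8 * q) := by
  rw [orderThreeSeq, if_neg (by omega), if_neg (by omega), if_pos (by omega),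
    show n / 6 = q by omega]

lemma orderThreeSeq_of_eq_six_mul_add_four {n q : ℕ} (h : n = 6 * q + 4) :
    orderThreeSeq a n = -a ^ (12 * q ^ 2 + 16 * q + 4) := by
  rw [orderThreeSeq, if_neg (by omega), if_neg (by omega), if_neg (by omega), if_pos (by omega),
    show n / 6 = q by omega]

lemma orderThreeSeq_of_eq_six_mul_add_five {n q : ℕ} (h : n = 6 * q + 5) :
    orderThreeSeq a n = -a ^ (12 * q ^ 2 + 20 * q + 8) := by
  rw [orderThreeSeq, if_neg (by omega), if_neg (by omega), if_neg (by omega), if_neg (by omega),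
    show n / 6 = q by omega]

lemma orderThreeSeq_even (m : ℕ) : orderThreeSeq a (2 * (m + 3)) =
    orderThreeSeq a (m + 2) ^ 2 * orderThreeSeq a (m + 3) * orderThreeSeq a (m + 5) -
      orderThreeSeq a (m + 1) * orderThreeSeq a (m + 3) * orderThreeSeq a (m + 4) ^ 2 := by
  obtain ⟨q, r, hr, rfl⟩ : ∃ q r, r < 6 ∧ m = 6 * q + r :=
    ⟨m / 6, m % 6, m.mod_lt (by norm_num), (Nat.div_add_mod m 6).symm⟩
  interval_cases r
  · rw [orderThreeSeq_of_three_dvd (n := 2 * (6 * q + 0 + 3)) (by omega),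
      orderThreeSeq_of_three_dvd (n := 6 * q + 0 + 3) (by omega)]
    ring
  · rw [orderThreeSeq_of_eq_six_mul_add_two (q := 2 * q + 1) (by omega),
      orderThreeSeq_of_three_dvd (n := 6 * q + 1 + 2) (by omega),
      orderThreeSeq_of_eq_six_mul_add_four (n := 6 * q + 1 + 3) (q := q) (by omega),
      orderThreeSeq_of_eq_six_mul_add_two (n := 6 * q + 1 + 1) (q := q) (by omega),
      orderThreeSeq_of_eq_six_mul_add_five (n := 6 * q + 1 + 4) (q := q) (by omega)]
    ring
  · rw [orderThreeSeq_of_eq_six_mul_add_four (q := 2 * q + 1) (by omega),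
      orderThreeSeq_of_eq_six_mul_add_four (n := 6 * q + 2 + 2) (q := q) (by omega),
      orderThreeSeq_of_eq_six_mul_add_five (n := 6 * q + 2 + 3) (q := q) (by omega),
      orderThreeSeq_of_eq_six_mul_add_one (n := 6 * q + 2 + 5) (q := q + 1) (by omega),
      orderThreeSeq_of_three_dvd (n := 6 * q + 2 + 1) (by omega)]
    ring
  · rw [orderThreeSeq_of_three_dvd (n := 2 * (6 * q + 3 + 3)) (by omega),
      orderThreeSeq_of_three_dvd (n := 6 * q + 3 + 3) (by omega)]
    ring
  · rw [orderThreeSeq_of_eq_six_mul_add_two (q := 2 * q + 2) (by omega),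
      orderThreeSeq_of_three_dvd (n := 6 * q + 4 + 2) (by omega),
      orderThreeSeq_of_eq_six_mul_add_five (n := 6 * q + 4 + 1) (q := q) (by omega),
      orderThreeSeq_of_eq_six_mul_add_one (n := 6 * q + 4 + 3) (q := q + 1) (by omega),
      orderThreeSeq_of_eq_six_mul_add_two (n := 6 * q + 4 + 4) (q := q + 1) (by omega)]
    ring
  · rw [orderThreeSeq_of_eq_six_mul_add_four (q := 2 * q + 2) (by omega),
      orderThreeSeq_of_eq_six_mul_add_one (n := 6 * q + 5 + 2) (q := q + 1) (by omega),
      orderThreeSeq_of_eq_six_mul_add_two (n := 6 * q + 5 + 3) (q := q + 1) (by omega),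
      orderThreeSeq_of_eq_six_mul_add_four (n := 6 * q + 5 + 5) (q := q + 1) (by omega),
      orderThreeSeq_of_three_dvd (n := 6 * q + 5 + 1) (by omega)]
    ring

lemma orderThreeSeq_odd (m : ℕ) : orderThreeSeq a (2 * (m + 2) + 1) =
    orderThreeSeq a (m + 4) * orderThreeSeq a (m + 2) ^ 3 * (if Even m then a ^ 4 else 1) -
      orderThreeSeq a (m + 1) * orderThreeSeq a (m + 3) ^ 3 * (if Even m then 1 else a ^ 4) := by
  obtain ⟨q, r, hr, rfl⟩ : ∃ q r, r < 6 ∧ m = 6 * q + r :=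
    ⟨m / 6, m % 6, m.mod_lt (by norm_num), (Nat.div_add_mod m 6).symm⟩
  have parity : Even (6 * q + r) ↔ r % 2 = 0 := by rw [Nat.even_iff]; omega
  interval_cases r <;> simp only [parity, Nat.reduceMod, Nat.reduceEqDiff, ↓reduceIte]
  · rw [orderThreeSeq_of_eq_six_mul_add_five (q := 2 * q) (by omega),
      orderThreeSeq_of_eq_six_mul_add_four (n := 6 * q + 0 + 4) (q := q) (by omega),
      orderThreeSeq_of_eq_six_mul_add_two (n := 6 * q + 0 + 2) (q := q) (by omega),
      orderThreeSeq_of_eq_six_mul_add_one (n := 6 * q + 0 + 1) (q := q) (by omega),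
      orderThreeSeq_of_three_dvd (n := 6 * q + 0 + 3) (by omega)]
    ring
  · rw [orderThreeSeq_of_eq_six_mul_add_one (q := 2 * q + 1) (by omega),
      orderThreeSeq_of_eq_six_mul_add_five (n := 6 * q + 1 + 4) (q := q) (by omega),
      orderThreeSeq_of_three_dvd (n := 6 * q + 1 + 2) (by omega),
      orderThreeSeq_of_eq_six_mul_add_two (n := 6 * q + 1 + 1) (q := q) (by omega),
      orderThreeSeq_of_eq_six_mul_add_four (n := 6 * q + 1 + 3) (q := q) (by omega)]
    ring
  · rw [orderThreeSeq_of_three_dvd (n := 2 * (6 * q + 2 + 2) + 1) (by omega),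
      orderThreeSeq_of_three_dvd (n := 6 * q + 2 + 4) (by omega),
      orderThreeSeq_of_three_dvd (n := 6 * q + 2 + 1) (by omega)]
    ring
  · rw [orderThreeSeq_of_eq_six_mul_add_five (q := 2 * q + 1) (by omega),
      orderThreeSeq_of_eq_six_mul_add_one (n := 6 * q + 3 + 4) (q := q + 1) (by omega),
      orderThreeSeq_of_eq_six_mul_add_five (n := 6 * q + 3 + 2) (q := q) (by omega),
      orderThreeSeq_of_eq_six_mul_add_four (n := 6 * q + 3 + 1) (q := q) (by omega),
      orderThreeSeq_of_three_dvd (n := 6 * q + 3 + 3) (by omega)]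
    ring
  · rw [orderThreeSeq_of_eq_six_mul_add_one (q := 2 * q + 2) (by omega),
      orderThreeSeq_of_eq_six_mul_add_two (n := 6 * q + 4 + 4) (q := q + 1) (by omega),
      orderThreeSeq_of_three_dvd (n := 6 * q + 4 + 2) (by omega),
      orderThreeSeq_of_eq_six_mul_add_five (n := 6 * q + 4 + 1) (q := q) (by omega),
      orderThreeSeq_of_eq_six_mul_add_one (n := 6 * q + 4 + 3) (q := q + 1) (by omega)]
    ring
  · rw [orderThreeSeq_of_three_dvd (n := 2 * (6 * q + 5 + 2) + 1) (by omega),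
      orderThreeSeq_of_three_dvd (n := 6 * q + 5 + 4) (by omega),
      orderThreeSeq_of_three_dvd (n := 6 * q + 5 + 1) (by omega)]
    ring

lemma preNormEDS'_eq_orderThreeSeq (n : ℕ) :
    preNormEDS' (a ^ 4) 0 (-a ^ 4) n = orderThreeSeq a n := by
  induction n using normEDSRec with
  | zero => rw [preNormEDS'_zero, orderThreeSeq_of_three_dvd (by norm_num)]
  | one => rw [preNormEDS'_one, orderThreeSeq_of_eq_six_mul_add_one (q := 0) rfl]; ring
  | two => rw [preNormEDS'_two, orderThreeSeq_of_eq_six_mul_add_two (q := 0) rfl]; ring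
  | three => rw [preNormEDS'_three, orderThreeSeq_of_three_dvd (by norm_num)]
  | four => rw [preNormEDS'_four, orderThreeSeq_of_eq_six_mul_add_four (q := 0) rfl]; ring
  | even m h₁ h₂ h₃ h₄ h₅ => rw [preNormEDS'_even, orderThreeSeq_even, h₁, h₂, h₃, h₄, h₅]
  | odd m h₁ h₂ h₃ h₄ => rw [preNormEDS'_odd, orderThreeSeq_odd, h₁, h₂, h₃, h₄]

lemma normEDS_eq_zero_of_three_dvd {k : ℤ} (h : 3 ∣ k) : normEDS a 0 (-a ^ 4) k = 0 := by
  obtain ⟨m, rfl | rfl⟩ := k.eq_nat_or_neg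
  · rw [normEDS_ofNat, preNormEDS'_eq_orderThreeSeq, orderThreeSeq_of_three_dvd (by omega),
      zero_mul]
  · rw [normEDS_neg, normEDS_ofNat, preNormEDS'_eq_orderThreeSeq,
      orderThreeSeq_of_three_dvd (by omega), zero_mul, neg_zero]

lemma normEDS_add_one_mul_normEDS_sub_one_of_three_dvd {n : ℕ} (h : 3 ∣ n) :
    normEDS a 0 (-a ^ 4) (n + 1) * normEDS a 0 (-a ^ 4) (n - 1) = -a ^ (2 * n ^ 2 / 3) := by
  rcases n.eq_zero_or_pos with rfl | hn
  · simp
  obtain ⟨t, rfl | rfl⟩ : ∃ t, n = 6 * t + 3 ∨ n = 6 * t + 6 := ⟨(n - 3) / 6, by omega⟩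
  · have hexp : 2 * (6 * t + 3) ^ 2 / 3 = 24 * t ^ 2 + 24 * t + 6 := by
      rw [show 2 * (6 * t + 3) ^ 2 = 3 * (24 * t ^ 2 + 24 * t + 6) by ring,
        Nat.mul_div_cancel_left _ three_pos]
    rw [show ((6 * t + 3 : ℕ) : ℤ) + 1 = (6 * t + 4 : ℕ) by push_cast; ring,
      show ((6 * t + 3 : ℕ) : ℤ) - 1 = (6 * t + 2 : ℕ) by push_cast; ring,
      normEDS_ofNat, normEDS_ofNat, preNormEDS'_eq_orderThreeSeq, preNormEDS'_eq_orderThreeSeq,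
      orderThreeSeq_of_eq_six_mul_add_four rfl, orderThreeSeq_of_eq_six_mul_add_two rfl,
      if_pos ⟨3 * t + 2, by ring⟩, if_pos ⟨3 * t + 1, by ring⟩, hexp]
    ring
  · have hexp : 2 * (6 * t + 6) ^ 2 / 3 = 24 * t ^ 2 + 48 * t + 24 := by
      rw [show 2 * (6 * t + 6) ^ 2 = 3 * (24 * t ^ 2 + 48 * t + 24) by ring,
        Nat.mul_div_cancel_left _ three_pos]
    rw [show ((6 * t + 6 : ℕ) : ℤ) + 1 = (6 * (t + 1) + 1 : ℕ) by push_cast; ring,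
      show ((6 * t + 6 : ℕ) : ℤ) - 1 = (6 * t + 5 : ℕ) by push_cast; ring,
      normEDS_ofNat, normEDS_ofNat, preNormEDS'_eq_orderThreeSeq, preNormEDS'_eq_orderThreeSeq,
      orderThreeSeq_of_eq_six_mul_add_one rfl, orderThreeSeq_of_eq_six_mul_add_five rfl,
      if_neg (by rw [Nat.not_even_iff_odd]; exact ⟨3 * t + 3, by ring⟩),
      if_neg (by rw [Nat.not_even_iff_odd]; exact ⟨3 * t + 2, by ring⟩), hexp]
    ring

end OrderThreeSeq

namespace WeierstrassCurve

variable {R : Type*} [CommRing R] (W : WeierstrassCurve R)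

lemma evalEval_zero_zero_ψ (h₂ : W.a₂ = 0) (h₄ : W.a₄ = 0) (h₆ : W.a₆ = 0) (n : ℤ) :
    evalEval 0 0 (W.ψ n) = normEDS W.a₃ 0 (-W.a₃ ^ 4) n := by
  have hψ₂ : evalEval 0 0 W.ψ₂ = W.a₃ := by simp [ψ₂, Affine.polynomialY, evalEval]
  have hΨ₃ : W.Ψ₃.eval 0 = 0 := by simp [Ψ₃, b₈, h₂, h₄, h₆]
  have hpreΨ₄ : W.preΨ₄.eval 0 = -W.a₃ ^ 4 := by
    simp [preΨ₄, b₄, b₆, b₈, h₂, h₄, h₆]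
    ring
  rw [← coe_evalEvalRingHom, WeierstrassCurve.ψ, map_normEDS, coe_evalEvalRingHom, hψ₂,
    evalEval_C, evalEval_C, hΨ₃, hpreΨ₄]

lemma evalEval_zero_zero_φ (h₂ : W.a₂ = 0) (h₄ : W.a₄ = 0) (h₆ : W.a₆ = 0) (n : ℤ) :
    evalEval 0 0 (W.φ n) =
      -(normEDS W.a₃ 0 (-W.a₃ ^ 4) (n + 1) * normEDS W.a₃ 0 (-W.a₃ ^ 4) (n - 1)) := by
  rw [WeierstrassCurve.φ, evalEval_sub, evalEval_mul, evalEval_mul, evalEval_C, eval_X,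
    evalEval_zero_zero_ψ W h₂ h₄ h₆, evalEval_zero_zero_ψ W h₂ h₄ h₆]
  ring

end WeierstrassCurve

theorem stmt_14_general (a₁ a₃ : ℚ) (n : ℕ) :
    (n % 3 = 1 ∨ n % 3 = 2 → evalEval 0 0 ((E3 a₁ a₃).φ (n : ℤ)) = 0) ∧
    (n % 3 = 0 → evalEval 0 0 ((E3 a₁ a₃).φ (n : ℤ)) = a₃ ^ (2 * n ^ 2 / 3)) := by
  have hG : evalEval 0 0 ((E3 a₁ a₃).φ n) =
      -(normEDS a₃ 0 (-a₃ ^ 4) (n + 1) * normEDS a₃ 0 (-a₃ ^ 4) (n - 1)) :=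
    (E3 a₁ a₃).evalEval_zero_zero_φ rfl rfl rfl n
  refine ⟨fun hn ↦ ?_, fun hn ↦ ?_⟩
  · obtain h | h : 3 ∣ (n : ℤ) + 1 ∨ 3 ∣ (n : ℤ) - 1 := by omega
    · rw [hG, normEDS_eq_zero_of_three_dvd h, zero_mul, neg_zero]
    · rw [hG, normEDS_eq_zero_of_three_dvd h, mul_zero, neg_zero]
  · rw [hG, normEDS_add_one_mul_normEDS_sub_one_of_three_dvd (by omega), neg_neg]

/-- For the curve `E₃ : y² + a₁xy + a₃y = x³` with `a₃ ≠ 0` and torsion point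
`P = (0, 0)` of order `3`, the numerator `Gₙ = φₙ(P)` of the `x`-coordinate of
`[n]P` satisfies `Gₙ = 0` if `n ≡ 1, 2 (mod 3)` and `Gₙ = a₃ ^ (2n²/3)` if
`n ≡ 0 (mod 3)`. -/
theorem stmt_14 (a₁ a₃ : ℚ) (ha : a₃ ≠ 0) (h : (E3 a₁ a₃).Nonsingular 0 0)
    (horder : addOrderOf (WeierstrassCurve.Affine.Point.some 0 0 h) = 3) (n : ℕ) :
    (n % 3 = 1 ∨ n % 3 = 2 → evalEval 0 0 ((E3 a₁ a₃).φ (n : ℤ)) = 0) ∧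
    (n % 3 = 0 → evalEval 0 0 ((E3 a₁ a₃).φ (n : ℤ)) = a₃ ^ (2 * n ^ 2 / 3)) :=
  stmt_14_general a₁ a₃ n
end
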